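/- arXiv:1506.02247 — 2 statements merged into one kernel-verified Lean document; each statement's English description precedes it below -/
import Mathlib

section
/- Level set identification under level-set invariance (equation (cor.5)): let u0 : Ω → ℝ be bounded measurable with no flat regions and let w : Ω → ℝ be bounded measurable with no flat regions, such that u0(x1) = u0(x2) implies w(x1) = w(x2) for all x1, x2 ∈ Ω and moreover x ↦ w(x) is a nondecreasing function of u0(x) (i.e. u0(x1) > u0(x2) implies w(x1) ≥ w(x2)). Then for every s ∈ (0,|Ω|), the sets {x ∈ Ω : w(x) > w_*(s)} and {x ∈ Ω : u0(x) > u_{0*}(s)} coincide up to a Lebesgue-null set, and consequently ∫_{{x : w(x) > w_*(s)}} u0(x) dx = ∫_0^s u_{0*}(σ) dσ. -/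
/-!
Since `w` is a nondecreasing function of `u0`, every superlevel set of `w` is comparable under
inclusion with every superlevel set of `u0`. Without flat regions, `{w > w_*(s)}` and
`{u0 > u_{0*}(s)}` both have measure exactly `s`, so being nested they agree up to a null set.
For the integral, `u0` restricted to `{u0 > u_{0*}(s)}` and `u_{0*}` restricted to `(0, s)` have
the same distribution (both assign `min s (m(q))` to `(q, ∞)`), hence the same integral.
-/

open MeasureTheory Set

/-- The distribution function `m_w(q) = |{x ∈ Ω : w(x) > q}|`. -/
noncomputable def distFun {d : ℕ} (Ω : Set (Fin d → ℝ)) (w : (Fin d → ℝ) → ℝ)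
    (q : ℝ) : ℝ :=
  (volume {x ∈ Ω | q < w x}).toReal

/-- The decreasing rearrangement `w_*(s) = inf{q ∈ ℝ : m_w(q) ≤ s}`. -/
noncomputable def decRearr {d : ℕ} (Ω : Set (Fin d → ℝ)) (w : (Fin d → ℝ) → ℝ)
    (s : ℝ) : ℝ :=
  sInf {q : ℝ | distFun Ω w q ≤ s}

section MeasureLemmas

variable {α : Type*} [MeasurableSpace α] {μ : Measure α} {s : Set α} {f : α → ℝ}

lemma measure_sep_lt_eq_iSup (q : ℝ) :
    μ {x ∈ s | q < f x} = ⨆ n : ℕ, μ {x ∈ s | q + 1 / (n + 1) < f x} := by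
  have hmono : Monotone fun n : ℕ => {x ∈ s | q + 1 / ((n : ℝ) + 1) < f x} :=
    fun n m hnm x hx => ⟨hx.1, by linarith [hx.2, Nat.one_div_le_one_div (α := ℝ) hnm]⟩
  rw [← hmono.measure_iUnion]
  congr 1
  ext x
  simp only [mem_sep_iff, mem_iUnion]
  constructor
  · rintro ⟨hx, hqx⟩
    obtain ⟨n, hn⟩ := exists_nat_one_div_lt (sub_pos.2 hqx)
    exact ⟨n, hx, by linarith⟩
  · rintro ⟨n, hx, hnx⟩
    exact ⟨hx, by linarith [Nat.one_div_pos_of_nat (α := ℝ) (n := n)]⟩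

lemma measure_sep_le_eq_iInf (hs : MeasurableSet s) (hf : Measurable f) (hμs : μ s ≠ ⊤)
    (q : ℝ) : μ {x ∈ s | q ≤ f x} = ⨅ n : ℕ, μ {x ∈ s | q - 1 / (n + 1) < f x} := by
  have hanti : Antitone fun n : ℕ => {x ∈ s | q - 1 / ((n : ℝ) + 1) < f x} :=
    fun n m hnm x hx => ⟨hx.1, by linarith [hx.2, Nat.one_div_le_one_div (α := ℝ) hnm]⟩
  rw [← hanti.measure_iInter (fun n => (hs.inter (hf measurableSet_Ioi)).nullMeasurableSet)
    ⟨0, measure_ne_top_of_subset (sep_subset _ _) hμs⟩]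
  congr 1
  ext x
  simp only [mem_sep_iff, mem_iInter]
  constructor
  · rintro ⟨hx, hqx⟩ n
    exact ⟨hx, by linarith [Nat.one_div_pos_of_nat (α := ℝ) (n := n)]⟩
  · intro h
    refine ⟨(h 0).1, le_of_forall_pos_lt_add fun ε hε => ?_⟩
    obtain ⟨n, hn⟩ := exists_nat_one_div_lt hε
    linarith [(h n).2]

end MeasureLemmas

lemma ae_eq_of_subset_or_superset {α : Type*} [MeasurableSpace α] {μ : Measure α}
    {s t : Set α} (hst : s ⊆ t ∨ t ⊆ s) (hμ : μ s = μ t) (hs : NullMeasurableSet s μ)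
    (ht : NullMeasurableSet t μ) (hμs : μ s ≠ ⊤) : s =ᵐ[μ] t := by
  rcases hst with hst | hts
  · exact ae_eq_of_subset_of_measure_ge hst hμ.ge hs (hμ ▸ hμs)
  · exact (ae_eq_of_subset_of_measure_ge hts hμ.le ht hμs).symm

lemma MeasureTheory.Measure.ext_of_Ioi_of_measure_univ {α : Type*} [TopologicalSpace α] [MeasurableSpace α]
    [SecondCountableTopology α] [LinearOrder α] [OrderTopology α] [BorelSpace α]
    (μ ν : Measure α) [IsFiniteMeasure μ] (huniv : μ univ = ν univ)
    (h : ∀ a, μ (Ioi a) = ν (Ioi a)) : μ = ν := by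
  have : IsFiniteMeasure ν := ⟨huniv ▸ measure_lt_top μ univ⟩
  refine Measure.ext_of_Iic μ ν fun a => ?_
  rw [← compl_Ioi, measure_compl measurableSet_Ioi (measure_ne_top _ _),
    measure_compl measurableSet_Ioi (measure_ne_top _ _), huniv, h]

lemma sep_lt_subset_or_superset {β : Type*} {s : Set β} {u w : β → ℝ}
    (hmono : ∀ x1 ∈ s, ∀ x2 ∈ s, u x2 < u x1 → w x2 ≤ w x1) (a b : ℝ) :
    {x ∈ s | a < w x} ⊆ {x ∈ s | b < u x} ∨ {x ∈ s | b < u x} ⊆ {x ∈ s | a < w x} := by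
  by_contra! h
  obtain ⟨x, ⟨hxs, hax⟩, hxb⟩ := not_subset.1 h.1
  obtain ⟨y, ⟨hys, hby⟩, hya⟩ := not_subset.1 h.2
  simp only [mem_sep_iff, hxs, hys, true_and, not_lt] at hxb hya
  linarith [hmono y hys x hxs (hxb.trans_lt hby)]

section Rearrangement

variable {d : ℕ} {Ω : Set (Fin d → ℝ)} {f : (Fin d → ℝ) → ℝ} {M : ℝ}

lemma distFun_antitone (hΩT : volume Ω ≠ ⊤) : Antitone (distFun Ω f) :=
  fun _ _ hpq => ENNReal.toReal_mono (measure_ne_top_of_subset (sep_subset _ _) hΩT)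
    (measure_mono fun _ hx => ⟨hx.1, hpq.trans_lt hx.2⟩)

lemma distFun_of_lt_neg (hb : ∀ x ∈ Ω, |f x| ≤ M) {q : ℝ} (hq : q < -M) :
    distFun Ω f q = (volume Ω).toReal := by
  rw [distFun, sep_eq_self_iff_mem_true.2 fun x hx => hq.trans_le (neg_le_of_abs_le (hb x hx))]

lemma distFun_of_le (hb : ∀ x ∈ Ω, |f x| ≤ M) {q : ℝ} (hq : M ≤ q) : distFun Ω f q = 0 := by
  rw [distFun, sep_eq_empty_iff_mem_false.2 fun x hx =>
    ((le_abs_self _).trans ((hb x hx).trans hq)).not_gt, measure_empty, ENNReal.toReal_zero]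

lemma distFun_le_of_forall_gt (hΩT : volume Ω ≠ ⊤) {q σ : ℝ} (hσ : 0 ≤ σ)
    (h : ∀ p > q, distFun Ω f p ≤ σ) : distFun Ω f q ≤ σ := by
  have hle : volume {x ∈ Ω | q < f x} ≤ ENNReal.ofReal σ := by
    rw [measure_sep_lt_eq_iSup]
    refine iSup_le fun n => ?_
    rw [ENNReal.le_ofReal_iff_toReal_le (measure_ne_top_of_subset (sep_subset _ _) hΩT) hσ]
    exact h _ (lt_add_of_pos_right q Nat.one_div_pos_of_nat)
  simpa [distFun, ENNReal.toReal_ofReal hσ] using ENNReal.toReal_mono ENNReal.ofReal_ne_top hle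

lemma lt_decRearr_iff (hΩT : volume Ω ≠ ⊤) (hb : ∀ x ∈ Ω, |f x| ≤ M) {σ q : ℝ}
    (hσ0 : 0 < σ) (hσΩ : σ < (volume Ω).toReal) :
    q < decRearr Ω f σ ↔ σ < distFun Ω f q := by
  have hne : {p | distFun Ω f p ≤ σ}.Nonempty := ⟨M, (distFun_of_le hb le_rfl).trans_le hσ0.le⟩
  have hbdd : BddBelow {p | distFun Ω f p ≤ σ} := by
    refine ⟨-M, fun p hp => le_of_not_gt fun hpM => ?_⟩
    rw [mem_ofPred_eq, distFun_of_lt_neg hb hpM] at hp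
    exact hp.not_gt hσΩ
  constructor
  · intro hq
    by_contra! hqσ
    exact (csInf_le hbdd hqσ).not_gt hq
  · intro hσq
    by_contra! hrq
    refine hσq.not_ge (distFun_le_of_forall_gt hΩT hσ0.le fun p hp => ?_)
    obtain ⟨r, hrσ, hrp⟩ := exists_lt_of_csInf_lt hne (hrq.trans_lt hp)
    exact (distFun_antitone hΩT hrp.le).trans hrσ

lemma decRearr_antitoneOn (hΩT : volume Ω ≠ ⊤) (hb : ∀ x ∈ Ω, |f x| ≤ M) :
    AntitoneOn (decRearr Ω f) (Ioo 0 (volume Ω).toReal) :=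
  fun _ hσ _ hτ hστ => le_of_forall_lt fun _ hq =>
    (lt_decRearr_iff hΩT hb hσ.1 hσ.2).2 (hστ.trans_lt ((lt_decRearr_iff hΩT hb hτ.1 hτ.2).1 hq))

lemma distFun_decRearr (hΩ : MeasurableSet Ω) (hf : Measurable f) (hΩT : volume Ω ≠ ⊤)
    (hb : ∀ x ∈ Ω, |f x| ≤ M) (hflat : ∀ q : ℝ, volume {x ∈ Ω | f x = q} = 0) {s : ℝ}
    (hs0 : 0 < s) (hsΩ : s < (volume Ω).toReal) :
    distFun Ω f (decRearr Ω f s) = s := by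
  set t := decRearr Ω f s
  refine le_antisymm (not_lt.1 fun h => ((lt_decRearr_iff hΩT hb hs0 hsΩ).2 h).false) ?_
  have hfin : ∀ q, volume {x ∈ Ω | q < f x} ≠ ⊤ :=
    fun q => measure_ne_top_of_subset (sep_subset _ _) hΩT
  have hs_le : ENNReal.ofReal s ≤ volume {x ∈ Ω | t ≤ f x} := by
    rw [measure_sep_le_eq_iInf hΩ hf hΩT]
    refine le_iInf fun n => (ENNReal.ofReal_le_iff_le_toReal (hfin _)).2 ?_
    exact ((lt_decRearr_iff hΩT hb hs0 hsΩ).1 (sub_lt_self t Nat.one_div_pos_of_nat)).le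
  have hle_lt : volume {x ∈ Ω | t ≤ f x} ≤ volume {x ∈ Ω | t < f x} := by
    calc volume {x ∈ Ω | t ≤ f x}
        ≤ volume ({x ∈ Ω | t < f x} ∪ {x ∈ Ω | f x = t}) :=
          measure_mono fun x hx => (hx.2.lt_or_eq).imp (fun h => ⟨hx.1, h⟩) fun h => ⟨hx.1, h.symm⟩
      _ ≤ volume {x ∈ Ω | t < f x} := by
          simpa only [hflat, add_zero] using
            measure_union_le (μ := volume) {x ∈ Ω | t < f x} {x ∈ Ω | f x = t}
  exact (ENNReal.ofReal_le_iff_le_toReal (hfin t)).1 (hs_le.trans hle_lt)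

lemma volume_sep_decRearr_lt (hΩ : MeasurableSet Ω) (hf : Measurable f)
    (hΩT : volume Ω ≠ ⊤) (hb : ∀ x ∈ Ω, |f x| ≤ M)
    (hflat : ∀ q : ℝ, volume {x ∈ Ω | f x = q} = 0) {s : ℝ}
    (hs0 : 0 < s) (hsΩ : s < (volume Ω).toReal) :
    volume {x ∈ Ω | decRearr Ω f s < f x} = ENNReal.ofReal s := by
  calc volume {x ∈ Ω | decRearr Ω f s < f x}
      = ENNReal.ofReal (distFun Ω f (decRearr Ω f s)) :=
        (ENNReal.ofReal_toReal (measure_ne_top_of_subset (sep_subset _ _) hΩT)).symm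
    _ = ENNReal.ofReal s := by rw [distFun_decRearr hΩ hf hΩT hb hflat hs0 hsΩ]

lemma aemeasurable_decRearr (hΩT : volume Ω ≠ ⊤) (hb : ∀ x ∈ Ω, |f x| ≤ M) {s : ℝ}
    (hsΩ : s ≤ (volume Ω).toReal) : AEMeasurable (decRearr Ω f) (volume.restrict (Ioo 0 s)) :=
  aemeasurable_restrict_of_antitoneOn measurableSet_Ioo
    ((decRearr_antitoneOn hΩT hb).mono (Ioo_subset_Ioo_right hsΩ))

lemma map_restrict_sep_decRearr_lt (hΩ : MeasurableSet Ω) (hf : Measurable f)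
    (hΩT : volume Ω ≠ ⊤) (hb : ∀ x ∈ Ω, |f x| ≤ M)
    (hflat : ∀ q : ℝ, volume {x ∈ Ω | f x = q} = 0) {s : ℝ}
    (hs0 : 0 < s) (hsΩ : s < (volume Ω).toReal) :
    Measure.map f (volume.restrict {x ∈ Ω | decRearr Ω f s < f x})
      = Measure.map (decRearr Ω f) (volume.restrict (Ioo 0 s)) := by
  set t := decRearr Ω f s
  have hB : MeasurableSet {x ∈ Ω | t < f x} := hΩ.inter (hf measurableSet_Ioi)
  have hBvol := volume_sep_decRearr_lt hΩ hf hΩT hb hflat hs0 hsΩ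
  have hg := aemeasurable_decRearr hΩT hb hsΩ.le
  have : IsFiniteMeasure (volume.restrict {x ∈ Ω | t < f x}) :=
    isFiniteMeasure_restrict.2 (hBvol ▸ ENNReal.ofReal_ne_top)
  refine Measure.ext_of_Ioi_of_measure_univ _ _ ?_ fun q => ?_
  · rw [Measure.map_apply hf MeasurableSet.univ, Measure.map_apply_of_aemeasurable hg
      MeasurableSet.univ, preimage_univ, preimage_univ, Measure.restrict_apply_univ,
      Measure.restrict_apply_univ, hBvol, Real.volume_Ioo, sub_zero]
  have hleft : f ⁻¹' Ioi q ∩ {x ∈ Ω | t < f x} = {x ∈ Ω | max t q < f x} := by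
    ext x
    simp only [mem_inter_iff, mem_preimage, mem_Ioi, mem_sep_iff, max_lt_iff]
    tauto
  have hright : decRearr Ω f ⁻¹' Ioi q ∩ Ioo 0 s = Ioo 0 (min s (distFun Ω f q)) := by
    ext σ
    simp only [mem_inter_iff, mem_preimage, mem_Ioi, mem_Ioo, lt_min_iff]
    constructor
    · rintro ⟨hq, hσ0, hσs⟩
      exact ⟨hσ0, hσs, (lt_decRearr_iff hΩT hb hσ0 (hσs.trans hsΩ)).1 hq⟩
    · rintro ⟨hσ0, hσs, hσq⟩
      exact ⟨(lt_decRearr_iff hΩT hb hσ0 (hσs.trans hsΩ)).2 hσq, hσ0, hσs⟩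
  rw [Measure.map_apply hf measurableSet_Ioi, Measure.map_apply_of_aemeasurable hg
    measurableSet_Ioi, Measure.restrict_apply' hB, Measure.restrict_apply' measurableSet_Ioo,
    hleft, hright, Real.volume_Ioo, sub_zero,
    ← ENNReal.ofReal_toReal (measure_ne_top_of_subset (sep_subset _ _) hΩT)]
  change ENNReal.ofReal (distFun Ω f (max t q)) = _
  rw [(distFun_antitone hΩT).map_max, distFun_decRearr hΩ hf hΩT hb hflat hs0 hsΩ]

lemma setIntegral_sep_decRearr_lt (hΩ : MeasurableSet Ω) (hf : Measurable f)
    (hΩT : volume Ω ≠ ⊤) (hb : ∀ x ∈ Ω, |f x| ≤ M)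
    (hflat : ∀ q : ℝ, volume {x ∈ Ω | f x = q} = 0) {s : ℝ}
    (hs0 : 0 < s) (hsΩ : s < (volume Ω).toReal) :
    ∫ x in {x ∈ Ω | decRearr Ω f s < f x}, f x = ∫ σ in (0 : ℝ)..s, decRearr Ω f σ := by
  calc ∫ x in {x ∈ Ω | decRearr Ω f s < f x}, f x
      = ∫ y, y ∂(Measure.map f (volume.restrict {x ∈ Ω | decRearr Ω f s < f x})) :=
        (integral_map hf.aemeasurable aestronglyMeasurable_id).symm
    _ = ∫ y, y ∂(Measure.map (decRearr Ω f) (volume.restrict (Ioo 0 s))) := by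
        rw [map_restrict_sep_decRearr_lt hΩ hf hΩT hb hflat hs0 hsΩ]
    _ = ∫ σ in Ioo 0 s, decRearr Ω f σ :=
        integral_map (aemeasurable_decRearr hΩT hb hsΩ.le) aestronglyMeasurable_id
    _ = ∫ σ in (0 : ℝ)..s, decRearr Ω f σ := by
        rw [intervalIntegral.integral_of_le hs0.le, integral_Ioc_eq_integral_Ioo]

end Rearrangement

theorem stmt_12_general
    (d : ℕ)
    (Ω : Set (Fin d → ℝ)) (hΩopen : IsOpen Ω) (hΩbdd : Bornology.IsBounded Ω)
    (u0 : (Fin d → ℝ) → ℝ) (hu0m : Measurable u0) (M0 : ℝ) (hu0b : ∀ x ∈ Ω, |u0 x| ≤ M0)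
    (hu0flat : ∀ q : ℝ, volume {x ∈ Ω | u0 x = q} = 0)
    (w : (Fin d → ℝ) → ℝ) (hwm : Measurable w) (M : ℝ) (hwb : ∀ x ∈ Ω, |w x| ≤ M)
    (hwflat : ∀ q : ℝ, volume {x ∈ Ω | w x = q} = 0)
    (hmono : ∀ x1 ∈ Ω, ∀ x2 ∈ Ω, u0 x2 < u0 x1 → w x2 ≤ w x1) :
    ∀ s ∈ Ioo (0:ℝ) (volume Ω).toReal,
      volume (symmDiff {x ∈ Ω | decRearr Ω w s < w x} {x ∈ Ω | decRearr Ω u0 s < u0 x}) = 0 ∧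
      (∫ x in {x ∈ Ω | decRearr Ω w s < w x}, u0 x)
        = ∫ σ in (0:ℝ)..s, decRearr Ω u0 σ := by
  rintro s ⟨hs0, hsΩ⟩
  have hΩ : MeasurableSet Ω := hΩopen.measurableSet
  have hΩT : volume Ω ≠ ⊤ := hΩbdd.measure_lt_top.ne
  have hvol_w := volume_sep_decRearr_lt hΩ hwm hΩT hwb hwflat hs0 hsΩ
  have hae : {x ∈ Ω | decRearr Ω w s < w x} =ᵐ[volume] {x ∈ Ω | decRearr Ω u0 s < u0 x} :=
    ae_eq_of_subset_or_superset (sep_lt_subset_or_superset hmono _ _)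
      (hvol_w.trans (volume_sep_decRearr_lt hΩ hu0m hΩT hu0b hu0flat hs0 hsΩ).symm)
      (hΩ.inter (hwm measurableSet_Ioi)).nullMeasurableSet
      (hΩ.inter (hu0m measurableSet_Ioi)).nullMeasurableSet (hvol_w ▸ ENNReal.ofReal_ne_top)
  exact ⟨measure_symmDiff_eq_zero_iff.2 hae, (setIntegral_congr_set hae).trans
    (setIntegral_sep_decRearr_lt hΩ hu0m hΩT hu0b hu0flat hs0 hsΩ)⟩

/-- Level set identification under level-set invariance (equation (cor.5)): if `w` is
a monotone nondecreasing function of `u0` (levelset-wise), both without flat regions,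
then `{w > w_*(s)}` and `{u0 > u_{0*}(s)}` coincide up to a null set and
`∫_{{w > w_*(s)}} u0 = ∫_0^s u_{0*}(σ) dσ`. -/
theorem stmt_12
    (d : ℕ) (hd : 1 ≤ d)
    (Ω : Set (Fin d → ℝ)) (hΩopen : IsOpen Ω) (hΩbdd : Bornology.IsBounded Ω)
    (u0 : (Fin d → ℝ) → ℝ) (hu0m : Measurable u0) (M0 : ℝ) (hu0b : ∀ x ∈ Ω, |u0 x| ≤ M0)
    (hu0flat : ∀ q : ℝ, volume {x ∈ Ω | u0 x = q} = 0)
    (w : (Fin d → ℝ) → ℝ) (hwm : Measurable w) (M : ℝ) (hwb : ∀ x ∈ Ω, |w x| ≤ M)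
    (hwflat : ∀ q : ℝ, volume {x ∈ Ω | w x = q} = 0)
    (hlevel : ∀ x1 ∈ Ω, ∀ x2 ∈ Ω, u0 x1 = u0 x2 → w x1 = w x2)
    (hmono : ∀ x1 ∈ Ω, ∀ x2 ∈ Ω, u0 x2 < u0 x1 → w x2 ≤ w x1) :
    ∀ s ∈ Ioo (0:ℝ) (volume Ω).toReal,
      volume (symmDiff {x ∈ Ω | decRearr Ω w s < w x} {x ∈ Ω | decRearr Ω u0 s < u0 x}) = 0 ∧
      (∫ x in {x ∈ Ω | decRearr Ω w s < w x}, u0 x)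
        = ∫ σ in (0:ℝ)..s, decRearr Ω u0 σ :=
  stmt_12_general d Ω hΩopen hΩbdd u0 hu0m M0 hu0b hu0flat w hwm M hwb hwflat hmono
end

section
/- Approximation by functions without flat regions (one-dimensional version of Lemma 5.1): let u : (a,b) → ℝ be bounded with finite total variation on (a,b). Then there exists a sequence of functions u_j : (a,b) → ℝ, each bounded with finite total variation, such that (i) each u_j has no flat regions, i.e. |{x ∈ (a,b) : u_j(x) = q}| = 0 for every q ∈ ℝ, (ii) sup_{x ∈ (a,b)} |u(x) − u_j(x)| ≤ 1/j for every j, and (iii) the total variation of u − u_j on (a,b) tends to 0 as j → ∞. -/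
open MeasureTheory Set Filter

/-!
Perturb `u` by a small linear function: `u_j x = u x + ε_j * x`. For two different slopes the
level sets `{u + ε x = r}` and `{u + ε' x = r'}` meet in at most one point, so they are a.e.
disjoint, and an s-finite measure gives positive mass to only countably many of them. Hence all
but countably many slopes `ε` leave `u + ε x` without flat regions, and such an `ε` can be chosen
in every interval `(0, δ)`. The error `ε x` is uniformly small on the bounded interval and its
variation is `|ε| (b - a)`.
-/

section Variation

variable {α E : Type*} [LinearOrder α] [SeminormedAddCommGroup E]

theorem eVariationOn_add_le (f g : α → E) (s : Set α) :
    eVariationOn (f + g) s ≤ eVariationOn f s + eVariationOn g s := by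
  refine iSup_le fun ⟨n, u, hu, us⟩ => ?_
  calc ∑ i ∈ Finset.range n, edist ((f + g) (u (i + 1))) ((f + g) (u i))
      ≤ ∑ i ∈ Finset.range n,
          (edist (f (u (i + 1))) (f (u i)) + edist (g (u (i + 1))) (g (u i))) :=
        Finset.sum_le_sum fun i _ => edist_add_add_le _ _ _ _
    _ = _ := Finset.sum_add_distrib
    _ ≤ _ := add_le_add (eVariationOn.sum_le hu us) (eVariationOn.sum_le hu us)

theorem BoundedVariationOn.add {f g : α → E} {s : Set α} (hf : BoundedVariationOn f s)
    (hg : BoundedVariationOn g s) : BoundedVariationOn (f + g) s :=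
  ne_top_of_le_ne_top (ENNReal.add_ne_top.2 ⟨hf, hg⟩) (eVariationOn_add_le f g s)

end Variation

theorem eVariationOn_const_mul_le (c : ℝ) {s : Set ℝ} {a b : ℝ} (hs : s ⊆ Icc a b) :
    eVariationOn (fun x => c * x) s ≤ ENNReal.ofReal (|c| * (b - a)) :=
  calc eVariationOn ((c • ·) ∘ id) s ≤ ‖c‖₊ * eVariationOn id s :=
        (lipschitzWith_smul c).lipschitzOnWith.comp_eVariationOn_le (mapsTo_univ _ _)
    _ ≤ ‖c‖₊ * eVariationOn id (Icc a b) := by gcongr; exact eVariationOn.mono _ hs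
    _ = ENNReal.ofReal (|c| * (b - a)) := by
        rw [eVariationOn_id_Icc, ENNReal.ofReal_mul (abs_nonneg c),
          ← Real.enorm_eq_ofReal_abs]
        rfl

theorem abs_const_mul_le_of_mem_Icc (c : ℝ) {a b x : ℝ} (hx : x ∈ Icc a b) :
    |c * x| ≤ |c| * (|a| + |b|) := by
  rw [abs_mul]
  exact mul_le_mul_of_nonneg_left ((abs_le_max_abs_abs hx.1 hx.2).trans (by grind)) (abs_nonneg c)

theorem LocallyBoundedVariationOn.aemeasurable_restrict {α : Type*} [LinearOrder α]
    [TopologicalSpace α] [OrderClosedTopology α] [MeasurableSpace α] [BorelSpace α]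
    {f : α → ℝ} {s : Set α} (hf : LocallyBoundedVariationOn f s) (μ : Measure α)
    (hs : MeasurableSet s) :
    AEMeasurable f (μ.restrict s) := by
  obtain ⟨p, q, hp, hq, rfl⟩ := hf.exists_monotoneOn_sub_monotoneOn
  exact (aemeasurable_restrict_of_monotoneOn hs hp).sub
    (aemeasurable_restrict_of_monotoneOn hs hq)

section Slopes

variable {μ : Measure ℝ} [SFinite μ] [NullSingletonClass μ] {f : ℝ → ℝ}

theorem countable_setOf_measure_levelSet_add_const_mul_ne_zero (hf : AEMeasurable f μ) :
    {c : ℝ | ∃ r, μ {x | f x + c * x = r} ≠ 0}.Countable := by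
  set B := {c : ℝ | ∃ r, μ {x | f x + c * x = r} ≠ 0}
  choose r hr using fun c : B => c.2
  let level : B → Set ℝ := fun c => {x | f x + c * x = r c}
  have hmeas : ∀ c, NullMeasurableSet (level c) μ := fun c =>
    (hf.add (measurable_id.const_mul _).aemeasurable).nullMeasurable (measurableSet_singleton _)
  have hdisj : Pairwise (Function.onFun (AEDisjoint μ) level) := by
    intro c d hcd
    refine Set.Subsingleton.measure_zero (fun x hx y hy => ?_) μ
    obtain ⟨hxc, hxd⟩ : f x + c * x = r c ∧ f x + d * x = r d := hx
    obtain ⟨hyc, hyd⟩ : f y + c * y = r c ∧ f y + d * y = r d := hy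
    have hcd' : (c : ℝ) - d ≠ 0 := sub_ne_zero.2 (Subtype.coe_injective.ne hcd)
    apply mul_left_cancel₀ hcd'
    linear_combination hxc - hxd - hyc + hyd
  have hpos := Measure.countable_meas_pos_of_disjoint_iUnion₀ hmeas hdisj
  rw [← Set.countable_coe_iff, ← Set.countable_univ_iff]
  convert hpos
  ext c
  simpa [pos_iff_ne_zero] using hr c

theorem exists_mem_Ioo_forall_measure_levelSet_add_const_mul_eq_zero (hf : AEMeasurable f μ)
    {δ : ℝ} (hδ : 0 < δ) : ∃ c ∈ Ioo 0 δ, ∀ r, μ {x | f x + c * x = r} = 0 := by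
  obtain ⟨c, hcB, hc⟩ :=
    ((countable_setOf_measure_levelSet_add_const_mul_ne_zero hf).dense_compl ℝ).exists_mem_open
      isOpen_Ioo (nonempty_Ioo.2 hδ)
  exact ⟨c, hc, by simpa using hcB⟩

end Slopes

theorem stmt_15_general
    (a b : ℝ)
    (u : ℝ → ℝ) (M : ℝ) (hub : ∀ x ∈ Ioo a b, |u x| ≤ M)
    (hBV : BoundedVariationOn u (Ioo a b)) :
    ∃ uj : ℕ → ℝ → ℝ,
      (∀ j : ℕ, (∃ Mj : ℝ, ∀ x ∈ Ioo a b, |uj j x| ≤ Mj) ∧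
        BoundedVariationOn (uj j) (Ioo a b)) ∧
      (∀ j : ℕ, ∀ q : ℝ, volume {x ∈ Ioo a b | uj j x = q} = 0) ∧
      (∀ j : ℕ, 1 ≤ j → ∀ x ∈ Ioo a b, |u x - uj j x| ≤ 1 / (j : ℝ)) ∧
      Tendsto (fun j : ℕ => eVariationOn (fun x => u x - uj j x) (Ioo a b))
        atTop (nhds 0) := by
  set C := |a| + |b| + 1
  have hC : 0 < C := by positivity
  have hu := hBV.locallyBoundedVariationOn.aemeasurable_restrict volume measurableSet_Ioo
  choose ε hε hflat using fun j : ℕ =>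
    exists_mem_Ioo_forall_measure_levelSet_add_const_mul_eq_zero hu
      (div_pos (Nat.one_div_pos_of_nat (n := j)) hC)
  have hεC : ∀ j : ℕ, |ε j| * C ≤ 1 / (j + 1) := fun j => by
    rw [abs_of_pos (hε j).1]
    exact ((lt_div_iff₀ hC).1 (hε j).2).le
  have hsmall : ∀ j : ℕ, ∀ x ∈ Ioo a b, |ε j * x| ≤ 1 / (j + 1) := fun j x hx =>
    (abs_const_mul_le_of_mem_Icc _ (Ioo_subset_Icc_self hx)).trans <|
      (mul_le_mul_of_nonneg_left (by linarith) (abs_nonneg _)).trans (hεC j)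
  have hvar : ∀ (j : ℕ) (c : ℝ), |c| = |ε j| →
      eVariationOn (fun x => c * x) (Ioo a b) ≤ ENNReal.ofReal (1 / (j + 1)) := fun j c hc => by
    refine (eVariationOn_const_mul_le c Ioo_subset_Icc_self).trans (ENNReal.ofReal_le_ofReal ?_)
    rw [hc]
    exact (mul_le_mul_of_nonneg_left (by grind) (abs_nonneg _)).trans (hεC j)
  refine ⟨fun j x => u x + ε j * x, fun j => ⟨⟨M + 1, fun x hx => ?_⟩, ?_⟩,
    fun j r => ?_, fun j hj x hx => ?_, ?_⟩
  · calc |u x + ε j * x| ≤ |u x| + |ε j * x| := abs_add_le _ _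
      _ ≤ M + 1 :=
        add_le_add (hub x hx) ((hsmall j x hx).trans ((div_le_one (by positivity)).2 (by simp)))
  · exact hBV.add (ne_top_of_le_ne_top ENNReal.ofReal_ne_top (hvar j _ rfl))
  · have := hflat j r
    rwa [Measure.restrict_apply' measurableSet_Ioo, inter_comm] at this
  · rw [show u x - (u x + ε j * x) = -(ε j * x) by ring, abs_neg]
    exact (hsmall j x hx).trans (one_div_le_one_div_of_le (Nat.cast_pos.2 hj) (by linarith))
  · simp_rw [show ∀ j : ℕ, (fun x => u x - (u x + ε j * x)) = fun x => -ε j * x from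
      fun j => funext fun x => by ring]
    refine tendsto_of_tendsto_of_tendsto_of_le_of_le tendsto_const_nhds ?_ (fun _ => zero_le)
      fun j => hvar j _ (abs_neg _)
    simpa using ENNReal.tendsto_ofReal (tendsto_one_div_add_atTop_nhds_zero_nat (𝕜 := ℝ))

/-- Approximation by functions without flat regions (one-dimensional version of
Lemma 5.1): a bounded function of finite total variation on `(a,b)` can be
approximated by bounded BV functions without flat regions, uniformly within `1/j`
and with the total variation of the difference tending to `0`. -/
theorem stmt_15
    (a b : ℝ) (hab : a < b)
    (u : ℝ → ℝ) (M : ℝ) (hub : ∀ x ∈ Ioo a b, |u x| ≤ M)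
    (hBV : BoundedVariationOn u (Ioo a b)) :
    ∃ uj : ℕ → ℝ → ℝ,
      (∀ j : ℕ, (∃ Mj : ℝ, ∀ x ∈ Ioo a b, |uj j x| ≤ Mj) ∧
        BoundedVariationOn (uj j) (Ioo a b)) ∧
      (∀ j : ℕ, ∀ q : ℝ, volume {x ∈ Ioo a b | uj j x = q} = 0) ∧
      (∀ j : ℕ, 1 ≤ j → ∀ x ∈ Ioo a b, |u x - uj j x| ≤ 1 / (j : ℝ)) ∧
      Tendsto (fun j : ℕ => eVariationOn (fun x => u x - uj j x) (Ioo a b))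
        atTop (nhds 0) :=
  stmt_15_general a b u M hub hBV
end
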